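/- arXiv:1805.12508 — 2 statements merged into one kernel-verified Lean document; each statement's English description precedes it below -/
import Mathlib

section
/- For every finite simple graph G with at least one edge, there exists a vertex w of G such that min-match(G − N_G[w]) ≤ min-match(G) − 1, where min-match denotes the minimum cardinality of a maximal matching. -/
/-!
Take a maximal matching `M` of minimum size and an edge `wx` of `M`. The edges of `M` avoiding
`N[w]` form a matching of `G - N[w]`; extend it to a maximal matching `D` of `G - N[w]`. Every
edge of `D` has an endpoint `a` covered by `M`, since `M` is maximal, and sending the edge to
the `M`-edge at `a` is injective: if two `D`-edges reach the same `M`-edge through different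
endpoints, that `M`-edge avoids `N[w]`, hence lies in `D` and equals both. The edge `wx` is never
reached, so `min-match(G - N[w]) ≤ |D| < |M| = min-match(G)`.
-/

open SimpleGraph

namespace Paper

/-- The complete graph on two vertices, `K₂`. -/
def k2 : SimpleGraph (Fin 2) := ⊤

/-- The 5-cycle `C₅`. -/
def cycle5 : SimpleGraph (ZMod 5) := SimpleGraph.fromRel (fun a b => b = a + 1)

/-- A graph is chordal if it has no induced cycle of length at least four. -/
def IsChordal {V : Type*} (G : SimpleGraph V) : Prop :=
  ∀ n : ℕ, 4 ≤ n → IsEmpty (SimpleGraph.cycleGraph n ↪g G)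

/-- A graph is co-chordal if its complement is chordal. -/
def IsCochordal {V : Type*} (G : SimpleGraph V) : Prop := IsChordal Gᶜ

/-- The co-chordal cover number: the minimum number of co-chordal subgraphs of `G`
needed to cover all edges of `G`. -/
noncomputable def cochord {V : Type*} (G : SimpleGraph V) : ℕ :=
  sInf { t | ∃ f : Fin t → SimpleGraph V,
    (∀ i, f i ≤ G ∧ IsCochordal (f i)) ∧ ∀ ⦃u v : V⦄, G.Adj u v → ∃ i, (f i).Adj u v }

/-- The closed neighborhood `N_G[w]`. -/
def closedNbhd {V : Type*} (G : SimpleGraph V) (w : V) : Set V :=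
  insert w (G.neighborSet w)

/-- The graph `G - N_G[w]`: the induced subgraph on the complement of the closed
neighborhood of `w`. -/
def delClosedNbhd {V : Type*} (G : SimpleGraph V) (w : V) :
    SimpleGraph ((closedNbhd G w)ᶜ : Set V) := G.induce _

/-- A maximal matching: a matching such that no edge of `G` is disjoint from all of
its edges. -/
def IsMaximalMatching {V : Type*} (G : SimpleGraph V) (M : G.Subgraph) : Prop :=
  M.IsMatching ∧ ∀ ⦃u v : V⦄, G.Adj u v → u ∈ M.support ∨ v ∈ M.support

/-- The minimum matching number: the minimum cardinality of a maximal matching. -/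
noncomputable def minMatch {V : Type*} (G : SimpleGraph V) : ℕ :=
  sInf { k | ∃ M : G.Subgraph, IsMaximalMatching G M ∧ M.edgeSet.ncard = k }

/-- The matching number of a graph: maximum cardinality of a matching. -/
noncomputable def matchNum {V : Type*} (G : SimpleGraph V) : ℕ :=
  sSup { k | ∃ M : G.Subgraph, M.IsMatching ∧ M.edgeSet.ncard = k }

/-- A graph all of whose connected components are isomorphic to `K₂` or `C₅`. -/
def IsK2C5Graph {V : Type*} (G : SimpleGraph V) : Prop :=
  ∀ c : G.ConnectedComponent,
    Nonempty (G.induce c.supp ≃g k2) ∨ Nonempty (G.induce c.supp ≃g cycle5)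

/-- A maximal `{K₂, C₅}`-subgraph of `G`: a subgraph whose components are all `K₂` or
`C₅` such that the induced subgraph of `G` on the vertices outside it has no edge. -/
def IsMaximalK2C5Subgraph {V : Type*} (G : SimpleGraph V) (H : G.Subgraph) : Prop :=
  IsK2C5Graph H.coe ∧ ∀ ⦃u v : V⦄, G.Adj u v → u ∈ H.verts ∨ v ∈ H.verts

/-- `min-match_{K₂,C₅}(G)`: the minimum matching number of a maximal
`{K₂, C₅}`-subgraph of `G` (with value `0` if `G` has no edge, via `sInf ∅ = 0`:
if `G` is edgeless the empty subgraph is a maximal `{K₂,C₅}`-subgraph). -/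
noncomputable def minMatchK2C5 {V : Type*} (G : SimpleGraph V) : ℕ :=
  sInf { k | ∃ H : G.Subgraph, IsMaximalK2C5Subgraph G H ∧ matchNum H.coe = k }

/-- An induced matching of `G`. -/
def IsInducedMatching {V : Type*} (G : SimpleGraph V) (M : G.Subgraph) : Prop :=
  M.IsMatching ∧ ∀ ⦃u v : V⦄, G.Adj u v → u ∈ M.support → v ∈ M.support → M.Adj u v

/-- The induced matching number of `G`. -/
noncomputable def indMatch {V : Type*} (G : SimpleGraph V) : ℕ :=
  sSup { k | ∃ M : G.Subgraph, IsInducedMatching G M ∧ M.edgeSet.ncard = k }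

/-- `ind-match_{K₂,C₅}(G)`: the maximum matching number of an induced subgraph of `G`
all of whose connected components are `K₂` or `C₅`. -/
noncomputable def indMatchK2C5 {V : Type*} (G : SimpleGraph V) : ℕ :=
  sSup { k | ∃ s : Set V, IsK2C5Graph (G.induce s) ∧ matchNum (G.induce s) = k }

end Paper

namespace SimpleGraph.Subgraph

variable {V : Type*} {G : SimpleGraph V} {M : G.Subgraph}

lemma IsMatching.eq_of_mem_edgeSet (hM : M.IsMatching) {e e' : Sym2 V} {v : V}
    (he : e ∈ M.edgeSet) (he' : e' ∈ M.edgeSet) (hv : v ∈ e) (hv' : v ∈ e') : e = e' := by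
  obtain ⟨w, rfl⟩ := Sym2.mem_iff_exists.mp hv
  obtain ⟨w', rfl⟩ := Sym2.mem_iff_exists.mp hv'
  rw [hM.eq_of_adj_left (Subgraph.mem_edgeSet.mp he) (Subgraph.mem_edgeSet.mp he')]

def restrictInduce (M : G.Subgraph) (s : Set V) : (G.induce s).Subgraph where
  verts := {a | ∃ b : s, M.Adj a b}
  Adj a b := M.Adj a b
  adj_sub h := M.adj_sub h
  edge_vert h := ⟨_, h⟩
  symm := ⟨fun _ _ h => M.adj_symm h⟩

lemma IsMatching.restrictInduce (hM : M.IsMatching) (s : Set V) :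
    (M.restrictInduce s).IsMatching := by
  rintro a ⟨b, hab⟩
  exact ⟨b, hab, fun c hac => Subtype.ext (hM.eq_of_adj_left hac hab)⟩

lemma IsMatching.eq_of_mem_edgeSet_of_coe_mem {s : Set V} {D : (G.induce s).Subgraph}
    (hD : D.IsMatching) (hMD : ∀ a b : s, M.Adj a b → D.Adj a b) {f₁ f₂ : Sym2 s}
    (hf₁ : f₁ ∈ D.edgeSet) (hf₂ : f₂ ∈ D.edgeSet) {g : Sym2 V} (hg : g ∈ M.edgeSet) {a₁ a₂ : s}
    (ha₁f : a₁ ∈ f₁) (ha₁g : ↑a₁ ∈ g) (ha₂f : a₂ ∈ f₂) (ha₂g : ↑a₂ ∈ g) : f₁ = f₂ := by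
  by_cases ha : a₁ = a₂
  · exact hD.eq_of_mem_edgeSet hf₁ hf₂ ha₁f (ha ▸ ha₂f)
  rw [(Sym2.mem_and_mem_iff (Subtype.coe_ne_coe.mpr ha)).mp ⟨ha₁g, ha₂g⟩] at hg
  have hD₁₂ : s(a₁, a₂) ∈ D.edgeSet := hMD a₁ a₂ hg
  exact (hD.eq_of_mem_edgeSet hf₁ hD₁₂ ha₁f (Sym2.mem_mk_left ..)).trans
    (hD.eq_of_mem_edgeSet hD₁₂ hf₂ (Sym2.mem_mk_right ..) ha₂f)

end SimpleGraph.Subgraph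

namespace Paper

section

variable {V : Type*} {G : SimpleGraph V} {M : G.Subgraph}

lemma exists_isMaximalMatching_le [Finite V] {A : G.Subgraph} (hA : A.IsMatching) :
    ∃ M, A ≤ M ∧ IsMaximalMatching G M := by
  obtain ⟨M, hAM, hM⟩ := Finite.exists_le_maximal (p := Subgraph.IsMatching) hA
  refine ⟨M, hAM, hM.prop, fun u v huv => ?_⟩
  by_contra! h
  have hdisj : Disjoint M.support (G.subgraphOfAdj huv).support := by
    rw [support_subgraphOfAdj, Set.disjoint_insert_right, Set.disjoint_singleton_right]
    exact h
  have hle := hM.le_of_ge (hM.prop.sup (.subgraphOfAdj huv) hdisj) le_sup_left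
  exact h.1 ⟨v, (subgraphOfAdj_le_iff huv M).mp (le_sup_right.trans hle)⟩

lemma exists_isMaximalMatching_ncard_eq_minMatch [Finite V] (G : SimpleGraph V) :
    ∃ M : G.Subgraph, IsMaximalMatching G M ∧ M.edgeSet.ncard = minMatch G := by
  obtain ⟨M, -, hM⟩ := exists_isMaximalMatching_le (A := (⊥ : G.Subgraph)) fun _ h => absurd h id
  exact Nat.sInf_mem (s := {k | ∃ M : G.Subgraph, IsMaximalMatching G M ∧ M.edgeSet.ncard = k})
    ⟨_, M, hM, rfl⟩

lemma minMatch_le (hM : IsMaximalMatching G M) : minMatch G ≤ M.edgeSet.ncard :=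
  Nat.sInf_le ⟨M, hM, rfl⟩

lemma IsMaximalMatching.exists_adj (hM : IsMaximalMatching G M) (hE : G.edgeSet.Nonempty) :
    ∃ u v, M.Adj u v := by
  obtain ⟨e, he⟩ := hE
  induction e using Sym2.ind with
  | _ u v => rcases hM.2 he with ⟨_, h⟩ | ⟨_, h⟩ <;> exact ⟨_, _, h⟩

lemma IsMaximalMatching.ncard_edgeSet_induce_lt [Finite V] (hM : IsMaximalMatching G M)
    {s : Set V} {D : (G.induce s).Subgraph} (hD : D.IsMatching)
    (hMD : ∀ a b : s, M.Adj a b → D.Adj a b) {u v : V} (huv : M.Adj u v) (hu : u ∉ s)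
    (hv : v ∉ s) : D.edgeSet.ncard < M.edgeSet.ncard := by
  have hcover : ∀ f : Sym2 s, ∃ g : Sym2 V, f ∈ D.edgeSet → g ∈ M.edgeSet ∧ ∃ a ∈ f, ↑a ∈ g := by
    intro f
    by_cases hf : f ∈ D.edgeSet
    swap
    · exact ⟨f.map (↑), fun h => (hf h).elim⟩
    induction f using Sym2.ind with
    | _ a b =>
      rcases hM.2 (D.adj_sub hf) with ⟨c, hc⟩ | ⟨c, hc⟩
      · exact ⟨s(a, c), fun _ => ⟨hc, a, Sym2.mem_mk_left .., Sym2.mem_mk_left ..⟩⟩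
      · exact ⟨s(b, c), fun _ => ⟨hc, b, Sym2.mem_mk_right .., Sym2.mem_mk_left ..⟩⟩
  choose φ hφ using hcover
  have hmaps : ∀ f ∈ D.edgeSet, φ f ∈ M.edgeSet \ {s(u, v)} := by
    intro f hf
    obtain ⟨hg, a, -, ha⟩ := hφ f hf
    refine ⟨hg, fun h => ?_⟩
    rw [Set.mem_singleton_iff.mp h, Sym2.mem_iff] at ha
    rcases ha with h | h
    · exact hu (h ▸ a.2)
    · exact hv (h ▸ a.2)
  have hinj : Set.InjOn φ D.edgeSet := by
    intro f₁ hf₁ f₂ hf₂ hφf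
    obtain ⟨hg, a₁, ha₁f, ha₁g⟩ := hφ f₁ hf₁
    obtain ⟨-, a₂, ha₂f, ha₂g⟩ := hφ f₂ hf₂
    exact hD.eq_of_mem_edgeSet_of_coe_mem hMD hf₁ hf₂ hg ha₁f ha₁g ha₂f (hφf ▸ ha₂g)
  calc D.edgeSet.ncard ≤ (M.edgeSet \ {s(u, v)}).ncard := Set.ncard_le_ncard_of_injOn φ hmaps hinj
    _ < M.edgeSet.ncard := Set.ncard_sdiff_singleton_lt_of_mem huv

end

/-- For every finite simple graph `G` with at least one edge, there exists a vertex `w`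
such that `min-match(G - N_G[w]) ≤ min-match(G) - 1`. -/
theorem stmt1 {V : Type*} [Fintype V] (G : SimpleGraph V) (hE : G.edgeSet.Nonempty) :
    ∃ w : V, minMatch (delClosedNbhd G w) + 1 ≤ minMatch G := by
  obtain ⟨M, hM, hMcard⟩ := exists_isMaximalMatching_ncard_eq_minMatch G
  obtain ⟨w, x, hwx⟩ := hM.exists_adj hE
  obtain ⟨D, hMD, hD⟩ := exists_isMaximalMatching_le (hM.1.restrictInduce (closedNbhd G w)ᶜ)
  have hw : w ∉ (closedNbhd G w)ᶜ := fun h => h (Set.mem_insert w _)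
  have hx : x ∉ (closedNbhd G w)ᶜ := fun h => h (Set.mem_insert_of_mem w (M.adj_sub hwx))
  refine ⟨w, ?_⟩
  calc minMatch (delClosedNbhd G w) + 1 ≤ D.edgeSet.ncard + 1 := by
        gcongr; exact minMatch_le hD
    _ ≤ minMatch G := hMcard ▸ hM.ncard_edgeSet_induce_lt hD.1 (fun _ _ h => hMD.2 h) hwx hw hx

end Paper
end

section
/- Let G be a triangle-free finite simple graph and let W(G) be the graph obtained from G by attaching a whisker (a new pendant vertex joined by an edge) to every vertex of G. Then any co-chordal subgraph of W(G) contains at most two whisker edges, and consequently cochord(W(G)) ≥ |V(G)|/2. -/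
/-!
A gap (an induced matching of two edges `ab`, `cd`) is an induced 4-cycle `a c b d` of the
complement, so a co-chordal graph has no gap. Two whisker edges of `W(G)` at non-adjacent vertices
of `G` form a gap, so the whisker edges of a co-chordal subgraph `H ≤ W(G)` sit at a clique of
`G`, which has at most two vertices when `G` is triangle-free. In a cover of `W(G)` by
`cochord(W(G))` co-chordal subgraphs each of the `|V|` whisker edges lies in some member, and
each member takes at most two of them.
-/

open SimpleGraph

namespace Paper

/-- The whisker graph `W(G)`: to each vertex `v : V` (as `Sum.inl v`) we attach a new
pendant vertex `Sum.inr v` joined to it by an edge. -/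
def whisker {V : Type*} (G : SimpleGraph V) : SimpleGraph (V ⊕ V) :=
  SimpleGraph.fromRel (fun a b =>
    (∃ u v : V, a = Sum.inl u ∧ b = Sum.inl v ∧ G.Adj u v) ∨
    (∃ v : V, a = Sum.inl v ∧ b = Sum.inr v))

end Paper

namespace SimpleGraph

variable {V : Type*}

theorem cycleGraph_not_adj_of_val_eq_add_two {n : ℕ} {i j : Fin n} (hj : j.val = i.val + 2)
    (hn : 4 ≤ n) : ¬(cycleGraph n).Adj i j := by
  rw [cycleGraph_adj']
  have hji : (j - i).val = 2 := by
    rw [Fin.coe_sub_iff_le.mpr (by rw [Fin.le_def]; omega)]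
    omega
  have hij : (i - j).val = n + i.val - j.val :=
    Fin.coe_sub_iff_lt.mpr (by rw [Fin.lt_def]; omega)
  omega

theorem IsClique.ncard_lt_of_cliqueFree {G : SimpleGraph V} {s : Set V} {n : ℕ}
    (hs : G.IsClique s) (hG : G.CliqueFree n) : s.ncard < n := by
  by_contra! hn
  have hn0 : n ≠ 0 := by rintro rfl; exact not_cliqueFree_zero hG
  obtain ⟨t, hts, htn⟩ := Set.exists_subset_card_eq hn
  have ht : t.Finite := Set.finite_of_ncard_ne_zero (htn ▸ hn0)
  refine hG ht.toFinset ⟨by simpa using hs.subset hts, ?_⟩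
  rw [← htn, Set.ncard_eq_toFinset_card t ht]

end SimpleGraph

namespace Paper

section

variable {V : Type*}

-- `a, c, b, d` is an induced 4-cycle of the complement.
theorem not_isCochordal_of_gap {H : SimpleGraph V} {a b c d : V}
    (hab : H.Adj a b) (hcd : H.Adj c d)
    (hac : ¬H.Adj a c) (had : ¬H.Adj a d) (hbc : ¬H.Adj b c) (hbd : ¬H.Adj b d) :
    ¬IsCochordal H := by
  intro hH
  have nac : a ≠ c := fun h => hbc (h ▸ hab.symm)
  have nad : a ≠ d := fun h => hac (h ▸ hcd.symm)
  have nbc : b ≠ c := fun h => hac (h ▸ hab)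
  have nbd : b ≠ d := fun h => had (h ▸ hab)
  have hinj : Function.Injective ![a, c, b, d] := by
    intro u v huv
    fin_cases u <;> fin_cases v <;> simp_all [hab.ne, hcd.ne, eq_comm]
  refine (hH 4 le_rfl).false ⟨⟨![a, c, b, d], hinj⟩, fun {u v} => ?_⟩
  fin_cases u <;> fin_cases v <;> simp_all [compl_adj, adj_comm] <;> decide

theorem isCochordal_fromEdgeSet_singleton (e : Sym2 V) :
    IsCochordal (fromEdgeSet {e}) := by
  intro n hn
  refine ⟨fun φ => ?_⟩
  -- The non-edges `{0, 2}` and `{1, 3}` of the cycle both have to go to the one edge `e`.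
  have key : ∀ i j : Fin n, j.val = i.val + 2 → s(φ i, φ j) = e := by
    intro i j hij
    have hne : φ i ≠ φ j := φ.injective.ne (by simp [Fin.ext_iff, hij])
    have h := (φ.map_rel_iff.not.mpr (cycleGraph_not_adj_of_val_eq_add_two hij hn))
    simpa [compl_adj, hne, fromEdgeSet_adj] using h
  have h := (key ⟨0, by omega⟩ ⟨2, by omega⟩ rfl).trans (key ⟨1, by omega⟩ ⟨3, by omega⟩ rfl).symm
  rcases Sym2.eq_iff.mp h with ⟨h, -⟩ | ⟨h, -⟩ <;>
    exact absurd (φ.injective h) (by simp [Fin.ext_iff])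

theorem exists_cochordal_cover [Finite V] (G : SimpleGraph V) :
    ∃ f : Fin (cochord G) → SimpleGraph V,
      (∀ i, f i ≤ G ∧ IsCochordal (f i)) ∧ ∀ ⦃u v : V⦄, G.Adj u v → ∃ i, (f i).Adj u v := by
  unfold cochord
  apply Nat.sInf_mem (s := {t | ∃ f : Fin t → SimpleGraph V,
    (∀ i, f i ≤ G ∧ IsCochordal (f i)) ∧ ∀ ⦃u v : V⦄, G.Adj u v → ∃ i, (f i).Adj u v})
  refine ⟨Nat.card G.edgeSet, ?_⟩
  let e : Fin (Nat.card G.edgeSet) ≃ G.edgeSet := (Finite.equivFin _).symm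
  refine ⟨fun i => fromEdgeSet {(e i : Sym2 V)}, fun i => ⟨?_, isCochordal_fromEdgeSet_singleton _⟩,
    fun u v huv => ⟨e.symm ⟨s(u, v), huv⟩, ?_⟩⟩
  · calc fromEdgeSet {(e i : Sym2 V)} ≤ fromEdgeSet G.edgeSet :=
          fromEdgeSet_mono (Set.singleton_subset_iff.mpr (e i).2)
      _ = G := fromEdgeSet_edgeSet G
  · simp only [fromEdgeSet_adj, Equiv.apply_symm_apply, Set.mem_singleton_iff]
    exact ⟨trivial, huv.ne⟩

theorem card_le_mul_cochord [Finite V] {ι : Type*} [Fintype ι] (G : SimpleGraph V)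
    (u w : ι → V) (hadj : ∀ i, G.Adj (u i) (w i)) (k : ℕ)
    (hk : ∀ H ≤ G, IsCochordal H → {i | H.Adj (u i) (w i)}.ncard ≤ k) :
    Fintype.card ι ≤ k * cochord G := by
  classical
  obtain ⟨f, hf, hcover⟩ := exists_cochordal_cover G
  choose g hg using fun i => hcover (hadj i)
  have hfiber : ∀ j ∈ (Finset.univ : Finset (Fin (cochord G))),
      (Finset.univ.filter fun i => g i = j).card ≤ k := by
    intro j _
    calc (Finset.univ.filter fun i => g i = j).card
        = ((Finset.univ.filter fun i => g i = j : Finset ι) : Set ι).ncard :=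
          (Set.ncard_coe_finset _).symm
      _ ≤ {i | (f j).Adj (u i) (w i)}.ncard :=
          Set.ncard_le_ncard fun i hi => by
            obtain rfl : g i = j := by simpa using hi
            exact hg i
      _ ≤ k := hk (f j) (hf j).1 (hf j).2
  simpa using Finset.card_le_mul_card_image_of_maps_to (fun i _ => Finset.mem_univ (g i)) k hfiber

section Whisker

variable (G : SimpleGraph V) {u v : V}

@[simp] theorem whisker_adj_inl_inl : (whisker G).Adj (.inl u) (.inl v) ↔ G.Adj u v := by
  simpa [whisker, fromRel_adj, G.adj_comm v u] using G.ne_of_adj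

@[simp] theorem whisker_adj_inl_inr : (whisker G).Adj (.inl u) (.inr v) ↔ u = v := by
  simpa [whisker, fromRel_adj] using eq_comm

@[simp] theorem whisker_adj_inr_inl : (whisker G).Adj (.inr u) (.inl v) ↔ u = v := by
  simp [whisker, fromRel_adj]

@[simp] theorem whisker_not_adj_inr_inr : ¬(whisker G).Adj (.inr u) (.inr v) := by
  simp [whisker, fromRel_adj]

theorem isClique_of_isCochordal_le_whisker {H : SimpleGraph (V ⊕ V)} (hle : H ≤ whisker G)
    (hH : IsCochordal H) : G.IsClique {v | H.Adj (.inl v) (.inr v)} := by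
  intro x hx y hy hxy
  by_contra hnadj
  refine not_isCochordal_of_gap hx hy ?_ ?_ ?_ ?_ hH <;> intro h <;> simpa [hnadj, hxy] using hle h

end Whisker

end

/-- If `G` is triangle-free, then every co-chordal subgraph of the whisker graph `W(G)`
contains at most two whisker edges, and consequently `cochord(W(G)) ≥ |V(G)|/2`. -/
theorem stmt13 {V : Type*} [Fintype V] (G : SimpleGraph V) (hG : G.CliqueFree 3) :
    (∀ H : SimpleGraph (V ⊕ V), H ≤ whisker G → IsCochordal H →
      {v : V | H.Adj (Sum.inl v) (Sum.inr v)}.ncard ≤ 2) ∧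
    Fintype.card V ≤ 2 * cochord (whisker G) := by
  have hwhiskers : ∀ H : SimpleGraph (V ⊕ V), H ≤ whisker G → IsCochordal H →
      {v : V | H.Adj (Sum.inl v) (Sum.inr v)}.ncard ≤ 2 := fun H hle hH =>
    Nat.le_of_lt_succ ((isClique_of_isCochordal_le_whisker G hle hH).ncard_lt_of_cliqueFree hG)
  exact ⟨hwhiskers, card_le_mul_cochord (whisker G) Sum.inl Sum.inr
    (fun v => (whisker_adj_inl_inr G).mpr rfl) 2 hwhiskers⟩

end Paper
end
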